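/- arXiv:0807.4621 — 6 statements merged into one kernel-verified Lean document; each statement's English description precedes it below -/
import Mathlib

section
/- For any two absolutely continuous functions q, q' : [0,T] → ℝ satisfying the integral equation q_t = q_0 + ∫₀ᵗ λ_s ds - ∫₀ᵗ θ_s (q_s - k_s)⁺ ds - ∫₀ᵗ μ_s (q_s ⊓ k_s) ds with the same initial value q_0, we have q_t = q'_t for all t ∈ [0,T]. (Uniqueness of the fluid limit equation.) -/
/-!
The drift `λ - θ (x - k)⁺ - μ (x ⊓ k)` is nonincreasing in the state `x`. So if `q 0 ≤ q' 0` but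
`q t > q' t`, then after the last time `τ ≤ t` with `q τ ≤ q' τ` the integrand of `q - q'` is
nonpositive, whence `q t - q' t ≤ q τ - q' τ ≤ 0`, a contradiction. Comparing in both directions
gives uniqueness. The drift is integrable because `k ≥ 0` gives `|(x - k)⁺|, |x ⊓ k| ≤ |x|`.
-/

open MeasureTheory intervalIntegral Set

theorem nonpos_of_eq_add_integral {h H : ℝ → ℝ} {a b : ℝ}
    (hh : ContinuousOn h (Icc a b)) (hH : IntegrableOn H (Icc a b))
    (heq : ∀ t ∈ Icc a b, h t = h a + ∫ s in a..t, H s) (ha : h a ≤ 0)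
    (hH_nonpos : ∀ s ∈ Icc a b, 0 < h s → H s ≤ 0) :
    ∀ t ∈ Icc a b, h t ≤ 0 := by
  intro t ht
  by_contra! hpos
  set S := Icc a t ∩ h ⁻¹' Iic 0
  have hS_closed : IsClosed S :=
    (hh.mono (Icc_subset_Icc_right ht.2)).preimage_isClosed_of_isClosed isClosed_Icc isClosed_Iic
  have haS : a ∈ S := ⟨left_mem_Icc.2 ht.1, ha⟩
  have hS_bdd : BddAbove S := ⟨t, fun s hs => hs.1.2⟩
  set τ := sSup S
  obtain ⟨⟨haτ, hτt⟩, hτ⟩ : τ ∈ S := hS_closed.csSup_mem ⟨a, haS⟩ hS_bdd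
  have hτ_mem : τ ∈ Icc a b := ⟨haτ, hτt.trans ht.2⟩
  have h_pos_after : ∀ s ∈ Ioc τ t, 0 < h s := fun s hs => by
    by_contra! hs0
    exact (le_csSup hS_bdd ⟨⟨haτ.trans hs.1.le, hs.2⟩, hs0⟩).not_gt hs.1
  have hint : ∀ u ∈ Icc a b, IntervalIntegrable H volume a u := fun u hu =>
    (hH.mono_set (uIcc_subset_Icc (left_mem_Icc.2 (hu.1.trans hu.2)) hu)).intervalIntegrable
  have h_diff : h t - h τ = ∫ s in τ..t, H s := by
    rw [heq t ht, heq τ hτ_mem, ← integral_interval_sub_left (hint t ht) (hint τ hτ_mem)]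
    ring
  have h_int_nonpos : ∫ s in τ..t, H s ≤ 0 := by
    rw [integral_of_le hτt]
    exact setIntegral_nonpos measurableSet_Ioc fun s hs =>
      hH_nonpos s ⟨haτ.trans hs.1.le, hs.2.trans ht.2⟩ (h_pos_after s hs)
  linarith [show h τ ≤ 0 from hτ]

theorem le_of_eq_add_integral_of_antitone {D : ℝ → ℝ → ℝ} {x y : ℝ → ℝ} {a b : ℝ}
    (hD : ∀ s ∈ Icc a b, Antitone (D · s))
    (hx : ContinuousOn x (Icc a b)) (hy : ContinuousOn y (Icc a b))
    (hDx : IntegrableOn (fun s => D (x s) s) (Icc a b))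
    (hDy : IntegrableOn (fun s => D (y s) s) (Icc a b))
    (hx_eq : ∀ t ∈ Icc a b, x t = x a + ∫ s in a..t, D (x s) s)
    (hy_eq : ∀ t ∈ Icc a b, y t = y a + ∫ s in a..t, D (y s) s) (ha : x a ≤ y a) :
    ∀ t ∈ Icc a b, x t ≤ y t := by
  have hint : ∀ t ∈ Icc a b, IntegrableOn (fun s => D (x s) s) (uIcc a t) ∧
      IntegrableOn (fun s => D (y s) s) (uIcc a t) := fun t ht =>
    have hsub := uIcc_subset_Icc (left_mem_Icc.2 (ht.1.trans ht.2)) ht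
    ⟨hDx.mono_set hsub, hDy.mono_set hsub⟩
  have key := nonpos_of_eq_add_integral (h := fun t => x t - y t)
    (H := fun s => D (x s) s - D (y s) s) (hx.sub hy) (hDx.sub hDy)
    (fun t ht => by
      rw [integral_sub (hint t ht).1.intervalIntegrable (hint t ht).2.intervalIntegrable,
        hx_eq t ht, hy_eq t ht]
      ring)
    (sub_nonpos.2 ha)
    (fun s hs hpos => sub_nonpos.2 (hD s hs (sub_pos.1 hpos).le))
  exact fun t ht => sub_nonpos.1 (key t ht)

def fluidDrift (lam θ μ k : ℝ → ℝ) (x s : ℝ) : ℝ :=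
  lam s - θ s * max (x - k s) 0 - μ s * min x (k s)

theorem fluidDrift_antitone {lam θ μ k : ℝ → ℝ} {s : ℝ} (hθ : 0 ≤ θ s) (hμ : 0 ≤ μ s) :
    Antitone (fluidDrift lam θ μ k · s) := fun x y hxy => by
  have h_max : max (x - k s) 0 ≤ max (y - k s) 0 := max_le_max (by linarith) le_rfl
  have h_min : min x (k s) ≤ min y (k s) := min_le_min hxy le_rfl
  simp only [fluidDrift]
  linarith [mul_le_mul_of_nonneg_left h_max hθ, mul_le_mul_of_nonneg_left h_min hμ]

theorem abs_max_sub_zero_le {x k : ℝ} (hk : 0 ≤ k) : |max (x - k) 0| ≤ |x| := by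
  rw [abs_of_nonneg (le_max_right _ _)]
  exact max_le (by linarith [le_abs_self x]) (abs_nonneg x)

theorem abs_min_le_of_nonneg {x k : ℝ} (hk : 0 ≤ k) : |min x k| ≤ |x| := by
  rcases le_total x k with hxk | hkx
  · rw [min_eq_left hxk]
  · rw [min_eq_right hkx, abs_of_nonneg hk]
    exact hkx.trans (le_abs_self x)

theorem integrableOn_fluidDrift {lam θ μ k x : ℝ → ℝ} {K : Set ℝ} (hK : IsCompact K)
    (hKm : MeasurableSet K) (hlam : IntegrableOn lam K) (hθ : IntegrableOn θ K)
    (hμ : IntegrableOn μ K) (hk : Measurable k) (hk0 : ∀ s ∈ K, 0 ≤ k s)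
    (hx : ContinuousOn x K) :
    IntegrableOn (fun s => fluidDrift lam θ μ k (x s) s) K := by
  obtain ⟨C, hC⟩ := hK.exists_bound_of_continuousOn hx
  have hxm : AEMeasurable x (volume.restrict K) := hx.aemeasurable hKm
  have h_max : ∀ᵐ s ∂volume.restrict K, ‖max (x s - k s) 0‖ ≤ C :=
    (ae_restrict_iff' hKm).2 <| .of_forall fun s hs =>
      (abs_max_sub_zero_le (hk0 s hs)).trans (hC s hs)
  have h_min : ∀ᵐ s ∂volume.restrict K, ‖min (x s) (k s)‖ ≤ C :=
    (ae_restrict_iff' hKm).2 <| .of_forall fun s hs =>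
      (abs_min_le_of_nonneg (hk0 s hs)).trans (hC s hs)
  have hθ_max : IntegrableOn (fun s => θ s * max (x s - k s) 0) K :=
    hθ.mul_bdd ((hxm.sub hk.aemeasurable).max aemeasurable_const).aestronglyMeasurable h_max
  have hμ_min : IntegrableOn (fun s => μ s * min (x s) (k s)) K :=
    hμ.mul_bdd (hxm.min hk.aemeasurable).aestronglyMeasurable h_min
  exact (hlam.sub hθ_max).sub hμ_min

theorem stmt_1_general (T : ℝ) (lam θ μ k : ℝ → ℝ)
    (hlam : IntegrableOn lam (Set.Icc 0 T)) (hθ : IntegrableOn θ (Set.Icc 0 T))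
    (hμ : IntegrableOn μ (Set.Icc 0 T))
    (hθ0 : ∀ t ∈ Set.Icc (0:ℝ) T, 0 ≤ θ t)
    (hμ0 : ∀ t ∈ Set.Icc (0:ℝ) T, 0 ≤ μ t)
    (hkm : Measurable k) (hk0 : ∀ t ∈ Set.Icc (0:ℝ) T, 0 ≤ k t)
    (q q' : ℝ → ℝ)
    (hq : ContinuousOn q (Set.Icc 0 T)) (hq' : ContinuousOn q' (Set.Icc 0 T))
    (heq : ∀ t ∈ Set.Icc (0:ℝ) T,
      q t = q 0 + ∫ s in (0:ℝ)..t, (lam s - θ s * max (q s - k s) 0 - μ s * min (q s) (k s)))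
    (heq' : ∀ t ∈ Set.Icc (0:ℝ) T,
      q' t = q' 0 + ∫ s in (0:ℝ)..t, (lam s - θ s * max (q' s - k s) 0 - μ s * min (q' s) (k s)))
    (h0 : q 0 = q' 0) :
    ∀ t ∈ Set.Icc (0:ℝ) T, q t = q' t := by
  have hD : ∀ s ∈ Icc 0 T, Antitone (fluidDrift lam θ μ k · s) := fun s hs =>
    fluidDrift_antitone (hθ0 s hs) (hμ0 s hs)
  have hF := integrableOn_fluidDrift isCompact_Icc measurableSet_Icc hlam hθ hμ hkm hk0 hq
  have hF' := integrableOn_fluidDrift isCompact_Icc measurableSet_Icc hlam hθ hμ hkm hk0 hq'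
  intro t ht
  exact le_antisymm
    (le_of_eq_add_integral_of_antitone hD hq hq' hF hF' heq heq' h0.le t ht)
    (le_of_eq_add_integral_of_antitone hD hq' hq hF' hF heq' heq h0.ge t ht)

/-- Uniqueness of solutions of the fluid limit integral equation. -/
theorem stmt_1 (T : ℝ) (hT : 0 < T) (lam θ μ k : ℝ → ℝ)
    (hlam : IntegrableOn lam (Set.Icc 0 T)) (hθ : IntegrableOn θ (Set.Icc 0 T))
    (hμ : IntegrableOn μ (Set.Icc 0 T))
    (hlam0 : ∀ t ∈ Set.Icc (0:ℝ) T, 0 ≤ lam t)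
    (hθ0 : ∀ t ∈ Set.Icc (0:ℝ) T, 0 ≤ θ t)
    (hμ0 : ∀ t ∈ Set.Icc (0:ℝ) T, 0 ≤ μ t)
    (hkm : Measurable k) (hk0 : ∀ t ∈ Set.Icc (0:ℝ) T, 0 ≤ k t)
    (M : ℝ) (hkb : ∀ t ∈ Set.Icc (0:ℝ) T, k t ≤ M)
    (q q' : ℝ → ℝ)
    (hq : ContinuousOn q (Set.Icc 0 T)) (hq' : ContinuousOn q' (Set.Icc 0 T))
    (heq : ∀ t ∈ Set.Icc (0:ℝ) T,
      q t = q 0 + ∫ s in (0:ℝ)..t, (lam s - θ s * max (q s - k s) 0 - μ s * min (q s) (k s)))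
    (heq' : ∀ t ∈ Set.Icc (0:ℝ) T,
      q' t = q' 0 + ∫ s in (0:ℝ)..t, (lam s - θ s * max (q' s - k s) 0 - μ s * min (q' s) (k s)))
    (h0 : q 0 = q' 0) :
    ∀ t ∈ Set.Icc (0:ℝ) T, q t = q' t :=
  stmt_1_general T lam θ μ k hlam hθ hμ hθ0 hμ0 hkm hk0 q q' hq hq' heq heq' h0
end

section
/- Suppose q : ℝ≥0 → ℝ is differentiable and satisfies q'_t = λ - θ·(q_t - 1)⁺ - μ·(q_t ⊓ 1) with q_0 ≥ 0, where λ > μ > 0 and θ > 0 are constants. Then q_t converges to (λ - μ)/θ + 1 as t → ∞. -/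
/-!
The drift `f x = λ - θ (x - 1)⁺ - μ (x ⊓ 1)` vanishes at `q* = (λ - μ)/θ + 1 > 1` and is strongly
decreasing there: `f x * (x - q*) ≤ -c (x - q*)²` with `c = μ ⊓ θ`, since `f` has slope `-μ` below
`1` and `-θ` above. Hence `(q t - q*)² e^{2ct}` is nonincreasing, and `q t → q*` exponentially fast.
-/

open Filter Set Real Topology

section Dissipative

variable {q q' : ℝ → ℝ} {a c : ℝ}

theorem antitoneOn_sq_sub_mul_exp
    (hq : ∀ t, 0 ≤ t → HasDerivAt q (q' t) t)
    (hdiss : ∀ t, 0 ≤ t → q' t * (q t - a) ≤ -(c * (q t - a) ^ 2)) :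
    AntitoneOn (fun t => (q t - a) ^ 2 * exp (2 * c * t)) (Ici 0) := by
  have hderiv : ∀ t, 0 ≤ t → HasDerivAt (fun t => (q t - a) ^ 2 * exp (2 * c * t))
      (2 * (q' t * (q t - a) + c * (q t - a) ^ 2) * exp (2 * c * t)) t := by
    intro t ht
    have hexp : HasDerivAt (fun t => exp (2 * c * t)) (exp (2 * c * t) * (2 * c)) t :=
      (hasDerivAt_exp _).comp t ((hasDerivAt_id t).const_mul (2 * c) |>.congr_deriv (mul_one _))
    have hsq : HasDerivAt (fun t => (q t - a) ^ 2) (2 * (q t - a) * q' t) t := by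
      simpa using ((hq t ht).sub_const a).fun_pow 2
    exact (hsq.mul hexp).congr_deriv (by ring)
  refine antitoneOn_of_hasDerivWithinAt_nonpos (convex_Ici 0)
    (fun t ht => (hderiv t ht).continuousAt.continuousWithinAt)
    (fun t ht => (hderiv t (interior_subset ht)).hasDerivWithinAt) fun t ht => ?_
  have : q' t * (q t - a) + c * (q t - a) ^ 2 ≤ 0 := by linarith [hdiss t (interior_subset ht)]
  exact mul_nonpos_of_nonpos_of_nonneg (by linarith) (exp_pos _).le

theorem sq_sub_le_mul_exp
    (hq : ∀ t, 0 ≤ t → HasDerivAt q (q' t) t)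
    (hdiss : ∀ t, 0 ≤ t → q' t * (q t - a) ≤ -(c * (q t - a) ^ 2)) {t : ℝ} (ht : 0 ≤ t) :
    (q t - a) ^ 2 ≤ (q 0 - a) ^ 2 * exp (-(2 * c * t)) := by
  have h := antitoneOn_sq_sub_mul_exp hq hdiss self_mem_Ici (mem_Ici.2 ht) ht
  simp only [mul_zero, exp_zero, mul_one] at h
  rw [exp_neg, ← div_eq_mul_inv, le_div_iff₀ (exp_pos _)]
  exact h

theorem tendsto_of_hasDerivAt_of_dissipative (hc : 0 < c)
    (hq : ∀ t, 0 ≤ t → HasDerivAt q (q' t) t)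
    (hdiss : ∀ t, 0 ≤ t → q' t * (q t - a) ≤ -(c * (q t - a) ^ 2)) :
    Tendsto q atTop (𝓝 a) := by
  have hbound : Tendsto (fun t => (q 0 - a) ^ 2 * exp (-(2 * c * t))) atTop (𝓝 0) := by
    simpa using (tendsto_exp_neg_atTop_nhds_zero.comp
      (tendsto_id.const_mul_atTop (by positivity : 0 < 2 * c))).const_mul ((q 0 - a) ^ 2)
  have hsq : Tendsto (fun t => (q t - a) ^ 2) atTop (𝓝 0) :=
    squeeze_zero' (.of_forall fun t => sq_nonneg _)
      (eventually_atTop.2 ⟨0, fun t ht => sq_sub_le_mul_exp hq hdiss ht⟩) hbound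
  have habs : Tendsto (fun t => |q t - a|) atTop (𝓝 0) := by
    simpa [Function.comp_def, sqrt_sq_eq_abs] using (continuous_sqrt.tendsto 0).comp hsq
  simpa using ((tendsto_zero_iff_abs_tendsto_zero _).2 habs).add_const a

end Dissipative

theorem fluid_drift_mul_sub_le {lam μ θ : ℝ} (hlam : μ < lam) (hθ : 0 < θ) (x : ℝ) :
    (lam - θ * max (x - 1) 0 - μ * min x 1) * (x - ((lam - μ) / θ + 1)) ≤
      -(min μ θ * (x - ((lam - μ) / θ + 1)) ^ 2) := by
  set a := (lam - μ) / θ + 1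
  have hlam_eq : lam = θ * (a - 1) + μ := by simp only [a]; field_simp; ring
  have ha : 1 < a := by simp only [a]; linarith [div_pos (sub_pos.2 hlam) hθ]
  rcases le_total x 1 with hx | hx
  · rw [max_eq_right (by linarith), min_eq_left hx]
    have hcoef : min μ θ * (a - x) ≤ θ * (a - 1) + μ * (1 - x) := by
      nlinarith [min_le_left μ θ, min_le_right μ θ]
    nlinarith [mul_le_mul_of_nonneg_right hcoef (by linarith : 0 ≤ a - x)]
  · rw [max_eq_left (by linarith), min_eq_right hx]
    nlinarith [min_le_right μ θ, sq_nonneg (x - a)]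

theorem stmt_2_general (lam μ θ : ℝ) (hμ : 0 < μ) (hlam : μ < lam) (hθ : 0 < θ)
    (q : ℝ → ℝ)
    (hq : ∀ t : ℝ, 0 ≤ t →
      HasDerivAt q (lam - θ * max (q t - 1) 0 - μ * min (q t) 1) t) :
    Tendsto q atTop (nhds ((lam - μ) / θ + 1)) :=
  tendsto_of_hasDerivAt_of_dissipative (lt_min hμ hθ) hq
    fun t _ => fluid_drift_mul_sub_le hlam hθ (q t)

/-- In the ED regime (`λ > μ`), the fluid limit converges to `(λ-μ)/θ + 1`. -/
theorem stmt_2 (lam μ θ : ℝ) (hμ : 0 < μ) (hlam : μ < lam) (hθ : 0 < θ)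
    (q : ℝ → ℝ) (hq0 : 0 ≤ q 0)
    (hq : ∀ t : ℝ, 0 ≤ t →
      HasDerivAt q (lam - θ * max (q t - 1) 0 - μ * min (q t) 1) t) :
    Tendsto q atTop (nhds ((lam - μ) / θ + 1)) :=
  stmt_2_general lam μ θ hμ hlam hθ q hq
end

section
/- Suppose q : ℝ≥0 → ℝ is differentiable and satisfies q'_t = λ·(1 - q_t)⁺ - θ·(q_t - 1)⁺ with q_0 ≥ 0, where λ, θ > 0. Then (q_t - 1)² ≤ (q_0 - 1)²·exp(-2·min(λ,θ)·t) for all t ≥ 0; in particular q_t → 1 as t → ∞. -/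
open Filter Real Topology

/-!
The squared distance `V = (q - 1)²` is a Lyapunov function: on either side of `1` the drift points
towards `1` with speed at least `min λ θ · |q - 1|`, so `V' = 2 (q - 1) q' ≤ -2 min λ θ · V`, and
Grönwall's inequality (here via monotonicity of `V · exp (2 min λ θ · t)`) gives the exponential bound.
-/

theorem le_mul_exp_of_hasDerivAt_le_mul {V V' : ℝ → ℝ} {c : ℝ}
    (hV : ∀ t, 0 ≤ t → HasDerivAt V (V' t) t) (hV' : ∀ t, 0 ≤ t → V' t ≤ c * V t)
    {t : ℝ} (ht : 0 ≤ t) : V t ≤ V 0 * exp (c * t) := by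
  have hW : ∀ s, 0 ≤ s → HasDerivAt (fun s => V s * exp (-c * s))
      ((V' s - c * V s) * exp (-c * s)) s := fun s hs =>
    ((hV s hs).fun_mul ((hasDerivAt_id' s).const_mul (-c)).exp).congr_deriv (by ring)
  have hanti : AntitoneOn (fun s => V s * exp (-c * s)) (Set.Ici 0) := by
    refine antitoneOn_of_hasDerivWithinAt_nonpos (convex_Ici 0)
      (fun s hs => (hW s hs).continuousAt.continuousWithinAt)
      (fun s hs => (hW s (interior_subset hs)).hasDerivWithinAt) fun s hs => ?_
    have hs : 0 ≤ s := interior_subset hs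
    exact mul_nonpos_of_nonpos_of_nonneg (sub_nonpos.2 (hV' s hs)) (exp_pos _).le
  have := hanti Set.self_mem_Ici ht ht
  simp only [mul_zero, exp_zero, mul_one] at this
  rwa [neg_mul, exp_neg, ← div_eq_mul_inv, div_le_iff₀ (exp_pos _)] at this

theorem sub_one_mul_drift_le_neg_min_mul_sq (lam θ x : ℝ) :
    (x - 1) * (lam * max (1 - x) 0 - θ * max (x - 1) 0) ≤ -min lam θ * (x - 1) ^ 2 := by
  rcases le_total x 1 with hx | hx
  · rw [max_eq_left (by linarith), max_eq_right (by linarith)]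
    nlinarith [min_le_left lam θ, sq_nonneg (x - 1)]
  · rw [max_eq_right (by linarith), max_eq_left (by linarith)]
    nlinarith [min_le_right lam θ, sq_nonneg (x - 1)]

theorem tendsto_of_sq_sub_le_mul_exp {f : ℝ → ℝ} {a C c : ℝ} (hc : c < 0)
    (h : ∀ t, 0 ≤ t → (f t - a) ^ 2 ≤ C * exp (c * t)) : Tendsto f atTop (𝓝 a) := by
  have hexp : Tendsto (fun t => C * exp (c * t)) atTop (𝓝 0) := by
    simpa using (tendsto_exp_atBot.comp (tendsto_id.const_mul_atTop_of_neg hc)).const_mul C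
  have hsq : Tendsto (fun t => (f t - a) ^ 2) atTop (𝓝 0) :=
    squeeze_zero' (.of_forall fun t => sq_nonneg _)
      ((eventually_ge_atTop 0).mono h) hexp
  have := hsq.sqrt
  simp only [sqrt_sq_eq_abs, sqrt_zero] at this
  exact tendsto_sub_nhds_zero_iff.1 ((tendsto_zero_iff_abs_tendsto_zero _).2 this)

theorem stmt_4_general (lam θ : ℝ) (hlam : 0 < lam) (hθ : 0 < θ)
    (q : ℝ → ℝ)
    (hq : ∀ t : ℝ, 0 ≤ t →
      HasDerivAt q (lam * max (1 - q t) 0 - θ * max (q t - 1) 0) t) :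
    (∀ t : ℝ, 0 ≤ t →
      (q t - 1) ^ 2 ≤ (q 0 - 1) ^ 2 * exp (-2 * min lam θ * t)) ∧
    Tendsto q atTop (nhds 1) := by
  have hV : ∀ t, 0 ≤ t → HasDerivAt (fun s => (q s - 1) ^ 2)
      (2 * ((q t - 1) * (lam * max (1 - q t) 0 - θ * max (q t - 1) 0))) t := fun t ht =>
    (((hq t ht).sub_const 1).fun_pow 2).congr_deriv (by ring)
  have hdecay : ∀ t, 0 ≤ t → (q t - 1) ^ 2 ≤ (q 0 - 1) ^ 2 * exp (-2 * min lam θ * t) :=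
    fun t ht => le_mul_exp_of_hasDerivAt_le_mul hV
      (fun s _ => by linarith [sub_one_mul_drift_le_neg_min_mul_sq lam θ (q s)]) ht
  have hrate : -2 * min lam θ < 0 := by nlinarith [lt_min hlam hθ]
  exact ⟨hdecay, tendsto_of_sq_sub_le_mul_exp hrate hdecay⟩

/-- Critically loaded fluid limit: exponential convergence of `(q_t - 1)²` to zero. -/
theorem stmt_4 (lam θ : ℝ) (hlam : 0 < lam) (hθ : 0 < θ)
    (q : ℝ → ℝ) (hq0 : 0 ≤ q 0)
    (hq : ∀ t : ℝ, 0 ≤ t →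
      HasDerivAt q (lam * max (1 - q t) 0 - θ * max (q t - 1) 0) t) :
    (∀ t : ℝ, 0 ≤ t →
      (q t - 1) ^ 2 ≤ (q 0 - 1) ^ 2 * exp (-2 * min lam θ * t)) ∧
    Tendsto q atTop (nhds 1) :=
  stmt_4_general lam θ hlam hθ q hq
end

section
/- Let q : ℝ≥0 → ℝ be continuous with q_t → λ/μ as t → ∞, where λ, μ > 0. Then e^{-2μ(t - t₀)} ∫_{t₀}^{t} e^{2μ(s - t₀)} (λ + μ·q_s) ds converges to λ/μ as t → ∞, for any fixed t₀ ≥ 0. -/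
/-!
Write `E t = exp (c (t - t₀))` with `c = 2μ`. Against a constant `L` the integral is explicit,
`∫_{t₀}^t E L = L (E t - 1) / c`, so after division by `E t` it tends to `L / c`. For `g → 0`
the integral `∫_{t₀}^t E g` is `o(E t)`: beyond a time `T` where `|g| ≤ ε` the tail contributes
at most `ε E t / c`, and the fixed initial piece up to `T` is negligible since `E t → ∞`.
Apply this to `λ + μ q = 2λ + μ (q - λ/μ)`.
-/

open Filter Real MeasureTheory intervalIntegral
open scoped Topology

section ExpWeightedIntegral

variable {c : ℝ} (t₀ : ℝ)

theorem integral_exp_mul_sub (hc : c ≠ 0) (a b : ℝ) :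
    ∫ s in a..b, exp (c * (s - t₀)) = (exp (c * (b - t₀)) - exp (c * (a - t₀))) / c := by
  simp_rw [mul_sub]
  rw [integral_comp_mul_sub (fun x => exp x) hc, integral_exp, smul_eq_mul, inv_mul_eq_div]

theorem tendsto_exp_mul_sub_atTop (hc : 0 < c) :
    Tendsto (fun t => exp (c * (t - t₀))) atTop atTop :=
  tendsto_exp_atTop.comp ((tendsto_atTop_add_const_right _ (-t₀) tendsto_id).const_mul_atTop hc)

theorem abs_integral_exp_mul_le (hc : 0 < c) {g : ℝ → ℝ} {T t M : ℝ} (hTt : T ≤ t)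
    (hg : ∀ s ≥ T, |g s| ≤ M) :
    |∫ s in T..t, exp (c * (s - t₀)) * g s| ≤ M / c * exp (c * (t - t₀)) := by
  have hM : 0 ≤ M / c := div_nonneg ((abs_nonneg _).trans (hg T le_rfl)) hc.le
  calc |∫ s in T..t, exp (c * (s - t₀)) * g s|
      ≤ ∫ s in T..t, exp (c * (s - t₀)) * M := by
        rw [← norm_eq_abs]
        refine norm_integral_le_of_norm_le hTt (ae_of_all _ fun s hs => ?_) ?_
        · rw [norm_mul, norm_of_nonneg (exp_pos _).le]
          exact mul_le_mul_of_nonneg_left (hg s hs.1.le) (exp_pos _).le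
        · exact (by fun_prop : Continuous fun s => exp (c * (s - t₀)) * M).intervalIntegrable _ _
    _ = M / c * (exp (c * (t - t₀)) - exp (c * (T - t₀))) := by
        rw [intervalIntegral.integral_mul_const, integral_exp_mul_sub t₀ hc.ne']; ring
    _ ≤ M / c * exp (c * (t - t₀)) :=
        mul_le_mul_of_nonneg_left (sub_le_self _ (exp_pos _).le) hM

theorem isLittleO_integral_exp_mul (hc : 0 < c) {g : ℝ → ℝ} (hg : Continuous g)
    (hg0 : Tendsto g atTop (𝓝 0)) :
    (fun t => ∫ s in t₀..t, exp (c * (s - t₀)) * g s) =o[atTop]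
      fun t => exp (c * (t - t₀)) := by
  refine Asymptotics.isLittleO_iff.mpr fun ε hε => ?_
  obtain ⟨T, hT⟩ := Metric.tendsto_atTop.mp hg0 (ε * c / 2) (by positivity)
  set T' := max T t₀
  set C := |∫ s in t₀..T', exp (c * (s - t₀)) * g s|
  have hint : ∀ a b, IntervalIntegrable (fun s => exp (c * (s - t₀)) * g s) volume a b :=
    fun a b => (by fun_prop : Continuous fun s => exp (c * (s - t₀)) * g s).intervalIntegrable a b
  have hinitial : ∀ᶠ t in atTop, C ≤ ε / 2 * exp (c * (t - t₀)) :=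
    (tendsto_exp_mul_sub_atTop t₀ hc).eventually_ge_atTop (2 / ε * C) |>.mono fun t ht => by
      rw [div_mul_eq_mul_div, le_div_iff₀ two_pos]
      rw [div_mul_eq_mul_div, div_le_iff₀ hε] at ht
      linarith
  filter_upwards [hinitial, eventually_ge_atTop T'] with t hCt htT'
  have htail := abs_integral_exp_mul_le t₀ hc (g := g) htT'
    fun s hs => (by simpa using (hT s (le_of_max_le_left hs)).le : |g s| ≤ ε * c / 2)
  rw [norm_of_nonneg (exp_pos _).le, norm_eq_abs,
    ← integral_add_adjacent_intervals (hint t₀ T') (hint T' t)]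
  calc _ ≤ C + |∫ s in T'..t, exp (c * (s - t₀)) * g s| := abs_add_le _ _
    _ ≤ ε / 2 * exp (c * (t - t₀)) + ε * c / 2 / c * exp (c * (t - t₀)) := add_le_add hCt htail
    _ = ε * exp (c * (t - t₀)) := by field_simp; ring

theorem tendsto_exp_neg_mul_integral_exp_mul (hc : 0 < c) {f : ℝ → ℝ} {L : ℝ}
    (hf : Continuous f) (hfL : Tendsto f atTop (𝓝 L)) :
    Tendsto (fun t => exp (-c * (t - t₀)) * ∫ s in t₀..t, exp (c * (s - t₀)) * f s)
      atTop (𝓝 (L / c)) := by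
  have hsplit : ∀ t, exp (-c * (t - t₀)) * ∫ s in t₀..t, exp (c * (s - t₀)) * f s =
      L / c * (1 - exp (-c * (t - t₀))) +
        (∫ s in t₀..t, exp (c * (s - t₀)) * (f s - L)) / exp (c * (t - t₀)) := by
    intro t
    have hint : ∀ h : ℝ → ℝ, Continuous h →
        IntervalIntegrable (fun s => exp (c * (s - t₀)) * h s) volume t₀ t := fun h hh =>
      (by fun_prop : Continuous fun s => exp (c * (s - t₀)) * h s).intervalIntegrable _ _
    have hsum : ∫ s in t₀..t, exp (c * (s - t₀)) * f s =
        (∫ s in t₀..t, exp (c * (s - t₀)) * L) + ∫ s in t₀..t, exp (c * (s - t₀)) * (f s - L) := by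
      rw [← integral_add (hint _ continuous_const) (hint (fun s => f s - L) (by fun_prop))]
      simp only [← mul_add, add_sub_cancel]
    rw [hsum, intervalIntegral.integral_mul_const, integral_exp_mul_sub t₀ hc.ne', sub_self,
      mul_zero, exp_zero, neg_mul, exp_neg]
    field_simp
  have hdecay : Tendsto (fun t => exp (-c * (t - t₀))) atTop (𝓝 0) := by
    simp only [neg_mul, exp_neg]
    exact (tendsto_exp_mul_sub_atTop t₀ hc).inv_tendsto_atTop
  have hrest := (isLittleO_integral_exp_mul t₀ hc (g := fun s => f s - L) (by fun_prop)
    (by simpa using hfL.sub_const L)).tendsto_div_nhds_zero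
  simpa only [hsplit, sub_zero, mul_one, add_zero] using
    ((tendsto_const_nhds (x := 1).sub hdecay).const_mul (L / c)).add hrest

end ExpWeightedIntegral

theorem stmt_7_general (lam μ t₀ : ℝ) (hμ : 0 < μ)
    (q : ℝ → ℝ) (hq : Continuous q) (hlim : Tendsto q atTop (nhds (lam / μ))) :
    Tendsto (fun t : ℝ =>
        exp (-2 * μ * (t - t₀)) * ∫ s in t₀..t, exp (2 * μ * (s - t₀)) * (lam + μ * q s))
      atTop (nhds (lam / μ)) := by
  have hf : Tendsto (fun s => lam + μ * q s) atTop (𝓝 (2 * lam)) := by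
    simpa [mul_div_cancel₀ _ hμ.ne', ← two_mul] using (hlim.const_mul μ).const_add lam
  have h := tendsto_exp_neg_mul_integral_exp_mul t₀ (by positivity : 0 < 2 * μ)
    (by fun_prop) hf
  rw [mul_div_mul_left _ _ two_ne_zero] at h
  simpa only [neg_mul] using h

/-- The limiting variance computation in the quality-driven regime. -/
theorem stmt_7 (lam μ t₀ : ℝ) (hlam : 0 < lam) (hμ : 0 < μ) (ht₀ : 0 ≤ t₀)
    (q : ℝ → ℝ) (hq : Continuous q) (hlim : Tendsto q atTop (nhds (lam / μ))) :
    Tendsto (fun t : ℝ =>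
        exp (-2 * μ * (t - t₀)) * ∫ s in t₀..t, exp (2 * μ * (s - t₀)) * (lam + μ * q s))
      atTop (nhds (lam / μ)) :=
  stmt_7_general lam μ t₀ hμ q hq hlim
end

section
/- Let x^n : [0,T] → ℝ be a sequence of functions converging uniformly to a continuous function x, let q, k : [0,T] → ℝ be measurable with q, k bounded, γ^n → γ uniformly and bounded, and θ integrable and nonnegative. Then ∫₀ᵗ θ_s·( (x^n_s + √n·q_s - (γ^n_s + √n·k_s))⁺ - √n·(q_s - k_s)⁺ ) ds converges, as n → ∞, to ∫₀ᵗ θ_s·( 1{q_s > k_s}·(x_s - γ_s) + 1{q_s = k_s}·(x_s - γ_s)⁺ ) ds for every t ∈ [0,T]. -/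
/-!
With `b = q - k` and `a_n = x^n - γ^n` the integrand is `θ (max (a_n + √n b) 0 - √n max b 0)`.
Since `max · 0` is 1-Lipschitz, it is bounded by `|θ| |a_n|`, and `|a_n|` is eventually bounded on
`[0, T]` by uniform convergence to the bounded function `x - γ`. Pointwise, `√n b → ±∞` makes the
expression eventually `0` where `b < 0` and `a_n` where `b > 0`, while it is `max a_n 0` where
`b = 0`. Dominated convergence concludes.
-/

open Filter Real MeasureTheory intervalIntegral Topology

theorem abs_max_add_mul_sub_mul_max_le (a b : ℝ) {c : ℝ} (hc : 0 ≤ c) :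
    |max (a + c * b) 0 - c * max b 0| ≤ |a| := by
  rw [mul_max_of_nonneg _ _ hc, mul_zero]
  simpa using abs_max_sub_max_le_abs (a + c * b) (c * b) 0

theorem tendsto_max_add_mul_sub_mul_max {ι : Type*} {l : Filter ι} {a c : ι → ℝ} {A : ℝ}
    (b : ℝ) (ha : Tendsto a l (𝓝 A)) (hc : Tendsto c l atTop) :
    Tendsto (fun n => max (a n + c n * b) 0 - c n * max b 0) l
      (𝓝 ((if 0 < b then A else 0) + (if b = 0 then max A 0 else 0))) := by
  rcases lt_trichotomy b 0 with hb | rfl | hb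
  · rw [if_neg hb.not_gt, if_neg hb.ne, add_zero]
    have hneg : ∀ᶠ n in l, a n + c n * b < 0 :=
      (ha.add_atBot (hc.atTop_mul_const_of_neg hb)).eventually_lt_atBot 0
    refine tendsto_const_nhds.congr' ?_
    filter_upwards [hneg] with n hn
    rw [max_eq_right hn.le, max_eq_right hb.le, mul_zero, sub_zero]
  · simpa using ha.max tendsto_const_nhds
  · rw [if_pos hb, if_neg hb.ne', add_zero]
    have hpos : ∀ᶠ n in l, 0 ≤ a n + c n * b :=
      (ha.add_atTop (hc.atTop_mul_const hb)).eventually_ge_atTop 0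
    refine ha.congr' ?_
    filter_upwards [hpos] with n hn
    rw [max_eq_left hn, max_eq_left hb.le, add_sub_cancel_right]

theorem TendstoUniformlyOn.eventually_forall_norm_lt {ι α E : Type*} [SeminormedAddCommGroup E]
    {l : Filter ι} {F : ι → α → E} {f : α → E} {s : Set α} {M M' : ℝ}
    (hF : TendstoUniformlyOn F f l s) (hf : ∀ y ∈ s, ‖f y‖ ≤ M) (hM : M < M') :
    ∀ᶠ n in l, ∀ y ∈ s, ‖F n y‖ < M' := by
  filter_upwards [Metric.tendstoUniformlyOn_iff.1 hF (M' - M) (sub_pos.2 hM)] with n hn y hy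
  have hdist : ‖f y - F n y‖ < M' - M := dist_eq_norm (f y) (F n y) ▸ hn y hy
  linarith [norm_le_norm_add_norm_sub (f y) (F n y), hf y hy]

theorem tendsto_integral_mul_max_add_mul_sub_mul_max {α ι : Type*} [MeasurableSpace α]
    {μ : Measure α} {l : Filter ι} [l.IsCountablyGenerated] {θ b A : α → ℝ}
    {a : ι → α → ℝ} {c : ι → ℝ} {M : ℝ} (hθ : Integrable θ μ)
    (ha : ∀ n, AEStronglyMeasurable (a n) μ)
    (hb : AEStronglyMeasurable b μ) (hc : Tendsto c l atTop) (hc₀ : ∀ n, 0 ≤ c n)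
    (haM : ∀ᶠ n in l, ∀ᵐ s ∂μ, |a n s| ≤ M)
    (hA : ∀ᵐ s ∂μ, Tendsto (fun n => a n s) l (𝓝 (A s))) :
    Tendsto (fun n => ∫ s, θ s * (max (a n s + c n * b s) 0 - c n * max (b s) 0) ∂μ) l
      (𝓝 (∫ s, θ s *
        ((if 0 < b s then A s else 0) + (if b s = 0 then max (A s) 0 else 0)) ∂μ)) := by
  refine tendsto_integral_filter_of_dominated_convergence (fun s => ‖θ s‖ * M)
    (Eventually.of_forall fun n => by have := ha n; fun_prop) ?_ (hθ.norm.mul_const M) ?_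
  · filter_upwards [haM] with n hn
    filter_upwards [hn] with s hs
    rw [norm_mul, Real.norm_eq_abs (max _ _ - _)]
    exact mul_le_mul_of_nonneg_left ((abs_max_add_mul_sub_mul_max_le _ _ (hc₀ n)).trans hs)
      (norm_nonneg _)
  · filter_upwards [hA] with s hs
    exact (tendsto_max_add_mul_sub_mul_max (b s) hs hc).const_mul (θ s)

theorem stmt_11_general (T : ℝ)
    (x : ℕ → ℝ → ℝ) (x₀ : ℝ → ℝ) (hxm : ∀ n, Measurable (x n))
    (hx₀ : Continuous x₀)
    (hxu : TendstoUniformlyOn x x₀ atTop (Set.Icc 0 T))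
    (q k : ℝ → ℝ) (hqm : Measurable q) (hkm : Measurable k)
    (γn : ℕ → ℝ → ℝ) (γ : ℝ → ℝ) (hγnm : ∀ n, Measurable (γn n))
    (hγu : TendstoUniformlyOn γn γ atTop (Set.Icc 0 T))
    (Mγ : ℝ) (hγb : ∀ t ∈ Set.Icc (0:ℝ) T, |γ t| ≤ Mγ)
    (θ : ℝ → ℝ) (hθm : IntegrableOn θ (Set.Icc 0 T)) :
    ∀ t ∈ Set.Icc (0:ℝ) T,
      Tendsto (fun n : ℕ =>
          ∫ s in (0:ℝ)..t, θ s *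
            (max (x n s + Real.sqrt n * q s - (γn n s + Real.sqrt n * k s)) 0 -
              Real.sqrt n * max (q s - k s) 0))
        atTop
        (nhds (∫ s in (0:ℝ)..t, θ s *
          ((if q s > k s then x₀ s - γ s else 0) +
            (if q s = k s then max (x₀ s - γ s) 0 else 0)))) := by
  intro t ht
  have hsub : Set.Ioc 0 t ⊆ Set.Icc 0 T :=
    Set.Ioc_subset_Icc_self.trans (Set.Icc_subset_Icc_right ht.2)
  obtain ⟨C, hC⟩ :=
    (isCompact_Icc (a := 0) (b := T)).exists_bound_of_continuousOn hx₀.continuousOn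
  have hbound : ∀ y ∈ Set.Icc 0 T, ‖x₀ y - γ y‖ ≤ C + Mγ := fun y hy =>
    (norm_sub_le _ _).trans (add_le_add (hC y hy) (hγb y hy))
  have hintegrand : ∀ (n : ℕ) s, max (x n s + √n * q s - (γn n s + √n * k s)) 0 =
      max (x n s - γn n s + √n * (q s - k s)) 0 := fun n s => congrArg (max · 0) (by ring)
  have key := tendsto_integral_mul_max_add_mul_sub_mul_max (b := fun s => q s - k s)
    (a := fun n s => x n s - γn n s) (A := fun s => x₀ s - γ s) (c := fun n : ℕ => √n)
    (hθm.mono_set hsub) (fun n => ((hxm n).sub (hγnm n)).aestronglyMeasurable)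
    (hqm.sub hkm).aestronglyMeasurable (tendsto_sqrt_atTop.comp tendsto_natCast_atTop_atTop)
    (fun n => sqrt_nonneg _)
    (((hxu.sub hγu).eventually_forall_norm_lt hbound (lt_add_one _)).mono fun n hn =>
      ae_restrict_of_forall_mem measurableSet_Ioc fun s hs => (hn s (hsub hs)).le)
    (ae_restrict_of_forall_mem measurableSet_Ioc fun s hs =>
      (hxu.tendsto_at (hsub hs)).sub (hγu.tendsto_at (hsub hs)))
  simpa only [integral_of_le ht.1, hintegrand, sub_pos, sub_eq_zero] using key

/-- Identification of the centered abandonment drift in the diffusion limit. -/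
theorem stmt_11 (T : ℝ) (hT : 0 < T)
    (x : ℕ → ℝ → ℝ) (x₀ : ℝ → ℝ) (hxm : ∀ n, Measurable (x n))
    (hx₀ : Continuous x₀)
    (hxu : TendstoUniformlyOn x x₀ atTop (Set.Icc 0 T))
    (q k : ℝ → ℝ) (hqm : Measurable q) (hkm : Measurable k)
    (Mq : ℝ) (hqb : ∀ t ∈ Set.Icc (0:ℝ) T, |q t| ≤ Mq)
    (Mk : ℝ) (hkb : ∀ t ∈ Set.Icc (0:ℝ) T, |k t| ≤ Mk)
    (γn : ℕ → ℝ → ℝ) (γ : ℝ → ℝ) (hγnm : ∀ n, Measurable (γn n)) (hγm : Measurable γ)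
    (hγu : TendstoUniformlyOn γn γ atTop (Set.Icc 0 T))
    (Mγ : ℝ) (hγb : ∀ t ∈ Set.Icc (0:ℝ) T, |γ t| ≤ Mγ)
    (θ : ℝ → ℝ) (hθm : IntegrableOn θ (Set.Icc 0 T))
    (hθ0 : ∀ t ∈ Set.Icc (0:ℝ) T, 0 ≤ θ t) :
    ∀ t ∈ Set.Icc (0:ℝ) T,
      Tendsto (fun n : ℕ =>
          ∫ s in (0:ℝ)..t, θ s *
            (max (x n s + Real.sqrt n * q s - (γn n s + Real.sqrt n * k s)) 0 -
              Real.sqrt n * max (q s - k s) 0))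
        atTop
        (nhds (∫ s in (0:ℝ)..t, θ s *
          ((if q s > k s then x₀ s - γ s else 0) +
            (if q s = k s then max (x₀ s - γ s) 0 else 0)))) :=
  stmt_11_general T x x₀ hxm hx₀ hxu q k hqm hkm γn γ hγnm hγu Mγ hγb θ hθm
end

section
/- For all real a and b and sequences aₙ → a, the limit as n → ∞ of ( (aₙ + √n·b) ⊓ √n·c_n - √n·(b ⊓ c) ), where c_n → c with √n·(c_n - c) → γ, equals a·1{b < c} + (a ⊓ γ)·1{b = c} + γ·1{b > c}. -/
open Filter Real Topology

/-! Write `m = b ⊓ c`. Subtracting `√n m` inside the minimum gives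
`(aₙ + √n (b - m)) ⊓ (√n (cₙ - c) + √n (c - m))`. Each argument tends to its finite limit
(`a`, resp. `γ`) when the corresponding gap `b - m`, resp. `c - m`, vanishes, and to `+∞`
when it is positive; a minimum with a term tending to `+∞` has the limit of the other term. -/

lemma Filter.Tendsto.min_of_tendsto_atTop_left {α β : Type*} [LinearOrder β] [TopologicalSpace β]
    [OrderTopology β] [NoMaxOrder β] {l : Filter α} {f g : α → β} {L : β}
    (hf : Tendsto f l atTop) (hg : Tendsto g l (𝓝 L)) :
    Tendsto (fun x => min (f x) (g x)) l (𝓝 L) := by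
  obtain ⟨M, hLM⟩ := exists_gt L
  refine hg.congr' ?_
  filter_upwards [hg.eventually (eventually_lt_nhds hLM), hf.eventually_ge_atTop M]
    with x hgM hfM
  exact (min_eq_right (hgM.le.trans hfM)).symm

lemma Filter.Tendsto.min_of_tendsto_atTop_right {α β : Type*} [LinearOrder β]
    [TopologicalSpace β] [OrderTopology β] [NoMaxOrder β] {l : Filter α} {f g : α → β} {L : β}
    (hf : Tendsto f l (𝓝 L)) (hg : Tendsto g l atTop) :
    Tendsto (fun x => min (f x) (g x)) l (𝓝 L) := by
  simpa only [min_comm] using hg.min_of_tendsto_atTop_left hf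

lemma tendsto_add_sqrt_natCast_mul_atTop {x : ℕ → ℝ} {a d : ℝ}
    (hx : Tendsto x atTop (𝓝 a)) (hd : 0 < d) :
    Tendsto (fun n : ℕ => x n + √n * d) atTop atTop :=
  hx.add_atTop <| (tendsto_sqrt_atTop.comp tendsto_natCast_atTop_atTop).atTop_mul_const hd

theorem stmt_13_general (a b c γ : ℝ) (an cn : ℕ → ℝ) (han : Tendsto an atTop (nhds a))
    (hγ : Tendsto (fun n : ℕ => Real.sqrt n * (cn n - c)) atTop (nhds γ)) :
    Tendsto (fun n : ℕ =>
        min (an n + Real.sqrt n * b) (Real.sqrt n * cn n) - Real.sqrt n * min b c) atTop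
      (nhds (if b < c then a else if b = c then min a γ else γ)) := by
  have hsplit : ∀ n : ℕ,
      min (an n + √n * b) (√n * cn n) - √n * min b c =
        min (an n + √n * (b - min b c)) (√n * (cn n - c) + √n * (c - min b c)) := by
    intro n
    rw [← min_sub_sub_right]
    congr 1 <;> ring
  simp_rw [hsplit]
  rcases lt_trichotomy b c with hbc | rfl | hcb
  · simp only [if_pos hbc, min_eq_left hbc.le, sub_self, mul_zero, add_zero]
    exact han.min_of_tendsto_atTop_right (tendsto_add_sqrt_natCast_mul_atTop hγ (by linarith))
  · simp only [lt_irrefl, if_false, if_true, min_self, sub_self, mul_zero, add_zero]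
    exact han.min hγ
  · simp only [if_neg hcb.not_gt, if_neg hcb.ne', min_eq_right hcb.le, sub_self, mul_zero,
      add_zero]
    exact (tendsto_add_sqrt_natCast_mul_atTop han (by linarith)).min_of_tendsto_atTop_left hγ

/-- The elementary pointwise limit identifying the centered service-completion drift:
`(aₙ + √n b) ⊓ (√n cₙ) - √n (b ⊓ c) → a·1{b<c} + (a ⊓ γ)·1{b=c} + γ·1{b>c}`. -/
theorem stmt_13 (a b c γ : ℝ) (an cn : ℕ → ℝ) (han : Tendsto an atTop (nhds a))
    (hcn : Tendsto cn atTop (nhds c))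
    (hγ : Tendsto (fun n : ℕ => Real.sqrt n * (cn n - c)) atTop (nhds γ)) :
    Tendsto (fun n : ℕ =>
        min (an n + Real.sqrt n * b) (Real.sqrt n * cn n) - Real.sqrt n * min b c) atTop
      (nhds (if b < c then a else if b = c then min a γ else γ)) :=
  stmt_13_general a b c γ an cn han hγ
end
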